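/- Let ᴴA = { a ∈ A : d(a_(1)) ⊗ a_(2) = 1 ⊗ a in H⊗A }. Then for every a ∈ A the element (a⊗1)⊗(1⊗1) lies in H1□H1, and for every a ∈ ᴴA the element (1⊗1)⊗(a⊗1) lies in H1□H1. Moreover ᴴA ⊆ A^inv := { a ∈ A : d(a) = ε(a)1 }. (Proposition 2.7(iv).) -/
import Mathlib


open TensorProduct

noncomputable section

variable (k A H : Type*) [Field k] [Ring A] [Ring H]
  [HopfAlgebra k A] [HopfAlgebra k H]

/-- `t(a⊗h) = d(a)h`. -/
def tmap (d : A →ₗ[k] H) : A ⊗[k] H →ₗ[k] H :=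
  LinearMap.mul' k H ∘ₗ map d LinearMap.id

/-- `s(a⊗h) = ε(a)h`. -/
def smap : A ⊗[k] H →ₗ[k] H :=
  (TensorProduct.lid k H).toLinearMap ∘ₗ map (Coalgebra.counit : A →ₗ[k] k) LinearMap.id

/-- `i(h) = 1⊗h`. -/
def imap : H →ₗ[k] A ⊗[k] H := TensorProduct.mk k A H 1

/-- The tensor-product coproduct `Δ(a⊗h) = (a₁⊗h₁) ⊗ (a₂⊗h₂)` on `H1 = A ⊗ H`. -/
def comul1 : A ⊗[k] H →ₗ[k] (A ⊗[k] H) ⊗[k] (A ⊗[k] H) :=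
  (tensorTensorTensorComm k A A H H).toLinearMap ∘ₗ
    map (Coalgebra.comul : A →ₗ[k] A ⊗[k] A) (Coalgebra.comul : H →ₗ[k] H ⊗[k] H)

/-- The tensor-product counit `ε(a⊗h) = ε(a)ε(h)` on `H1 = A ⊗ H`. -/
def counit1 : A ⊗[k] H →ₗ[k] k :=
  (TensorProduct.lid k k).toLinearMap ∘ₗ
    map (Coalgebra.counit : A →ₗ[k] k) (Coalgebra.counit : H →ₗ[k] k)

/-- The left coaction `DL = (t⊗id)Δ`. -/
def DLmap (d : A →ₗ[k] H) : A ⊗[k] H →ₗ[k] H ⊗[k] (A ⊗[k] H) :=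
  map (tmap k A H d) LinearMap.id ∘ₗ comul1 k A H

/-- The right coaction `DR = (id⊗s)Δ`. -/
def DRmap : A ⊗[k] H →ₗ[k] (A ⊗[k] H) ⊗[k] H :=
  map LinearMap.id (smap k A H) ∘ₗ comul1 k A H

/-- The second product `(a⊗h)∘(b⊗g) = ε(h) ab ⊗ g`. -/
def circ : (A ⊗[k] H) ⊗[k] (A ⊗[k] H) →ₗ[k] A ⊗[k] H :=
  map (LinearMap.mul' k A)
      ((TensorProduct.lid k H).toLinearMap ∘ₗ map (Coalgebra.counit : H →ₗ[k] k) LinearMap.id)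
    ∘ₗ (tensorTensorTensorComm k A H A H).toLinearMap

/-- The quantum groupoid antipode `𝒮(a⊗h) = S(a₁) ⊗ d(a₂)h`. -/
def SS (d : A →ₗ[k] H) : A ⊗[k] H →ₗ[k] A ⊗[k] H :=
  map (HopfAlgebra.antipode (R := k) : A →ₗ[k] A) (tmap k A H d)
    ∘ₗ (TensorProduct.assoc k A A H).toLinearMap
    ∘ₗ map (Coalgebra.comul : A →ₗ[k] A ⊗[k] A) LinearMap.id

/-- The smash product multiplication `(a⊗h)(b⊗g) = a(h₁▷b) ⊗ h₂g`. -/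
def smashMul (act : H ⊗[k] A →ₗ[k] A) :
    (A ⊗[k] H) ⊗[k] (A ⊗[k] H) →ₗ[k] A ⊗[k] H :=
  map (LinearMap.mul' k A) LinearMap.id
  ∘ₗ (TensorProduct.assoc k A A H).symm.toLinearMap
  ∘ₗ map LinearMap.id
      (map act (LinearMap.mul' k H)
        ∘ₗ (tensorTensorTensorComm k H H A H).toLinearMap)
  ∘ₗ (TensorProduct.assoc k A (H ⊗[k] H) (A ⊗[k] H)).toLinearMap
  ∘ₗ map (map LinearMap.id (Coalgebra.comul : H →ₗ[k] H ⊗[k] H)) LinearMap.id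

/-- The cotensor product `H1□H1`. -/
def cot (d : A →ₗ[k] H) : Set ((A ⊗[k] H) ⊗[k] (A ⊗[k] H)) :=
  {x | (TensorProduct.assoc k (A ⊗[k] H) H (A ⊗[k] H)).toLinearMap
        (map (DRmap k A H) LinearMap.id x) = map LinearMap.id (DLmap k A H d) x}

/-- A Hopf (algebra) crossed module. -/
structure HopfCrossedModule (act : H ⊗[k] A →ₗ[k] A) (d : A →ₗ[k] H) : Prop where
  /-- `(hg)▷a = h▷(g▷a)` -/
  act_mul : ∀ (h g : H) (a : A), act ((h * g) ⊗ₜ[k] a) = act (h ⊗ₜ[k] act (g ⊗ₜ[k] a))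
  /-- `1▷a = a` -/
  act_one : ∀ a : A, act ((1 : H) ⊗ₜ[k] a) = a
  /-- `h▷(ab) = (h₁▷a)(h₂▷b)` -/
  act_mul_alg : act ∘ₗ map LinearMap.id (LinearMap.mul' k A)
      = LinearMap.mul' k A ∘ₗ map act act
          ∘ₗ (tensorTensorTensorComm k H H A A).toLinearMap
          ∘ₗ map (Coalgebra.comul : H →ₗ[k] H ⊗[k] H) LinearMap.id
  /-- `h▷1 = ε(h)1` -/
  act_unit : ∀ h : H, act (h ⊗ₜ[k] (1 : A)) = (Coalgebra.counit h : k) • (1 : A)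
  /-- `Δ(h▷a) = (h₁▷a₁)⊗(h₂▷a₂)` -/
  act_comul : (Coalgebra.comul : A →ₗ[k] A ⊗[k] A) ∘ₗ act
      = map act act ∘ₗ (tensorTensorTensorComm k H H A A).toLinearMap
          ∘ₗ map (Coalgebra.comul : H →ₗ[k] H ⊗[k] H) (Coalgebra.comul : A →ₗ[k] A ⊗[k] A)
  /-- `ε(h▷a) = ε(h)ε(a)` -/
  act_counit : ∀ (h : H) (a : A),
      (Coalgebra.counit (act (h ⊗ₜ[k] a)) : k) = Coalgebra.counit h * Coalgebra.counit a
  /-- `h₁ ⊗ (h₂▷a) = h₂ ⊗ (h₁▷a)` -/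
  act_cocomm : map LinearMap.id act ∘ₗ (TensorProduct.assoc k H H A).toLinearMap
        ∘ₗ map (Coalgebra.comul : H →ₗ[k] H ⊗[k] H) LinearMap.id
      = map LinearMap.id act ∘ₗ (TensorProduct.assoc k H H A).toLinearMap
        ∘ₗ map ((TensorProduct.comm k H H).toLinearMap
              ∘ₗ (Coalgebra.comul : H →ₗ[k] H ⊗[k] H)) LinearMap.id
  /-- `d` is multiplicative -/
  d_mul : ∀ a b : A, d (a * b) = d a * d b
  /-- `d(1) = 1` -/
  d_one : d 1 = 1
  /-- `d` is comultiplicative -/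
  d_comul : (Coalgebra.comul : H →ₗ[k] H ⊗[k] H) ∘ₗ d
      = map d d ∘ₗ (Coalgebra.comul : A →ₗ[k] A ⊗[k] A)
  /-- `ε∘d = ε` -/
  d_counit : (Coalgebra.counit : H →ₗ[k] k) ∘ₗ d = (Coalgebra.counit : A →ₗ[k] k)
  /-- `d(h▷a) = h₁ d(a) S(h₂)` -/
  d_act : d ∘ₗ act = LinearMap.mul' k H
      ∘ₗ map LinearMap.id (LinearMap.mul' k H
            ∘ₗ map LinearMap.id (HopfAlgebra.antipode (R := k) : H →ₗ[k] H)
            ∘ₗ (TensorProduct.comm k H H).toLinearMap)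
      ∘ₗ (TensorProduct.assoc k H H H).toLinearMap
      ∘ₗ map (Coalgebra.comul : H →ₗ[k] H ⊗[k] H) d
  /-- `d(a)▷b = a₁ b S(a₂)` -/
  crossed : act ∘ₗ map d LinearMap.id = LinearMap.mul' k A
      ∘ₗ map LinearMap.id (LinearMap.mul' k A
            ∘ₗ map LinearMap.id (HopfAlgebra.antipode (R := k) : A →ₗ[k] A)
            ∘ₗ (TensorProduct.comm k A A).toLinearMap)
      ∘ₗ (TensorProduct.assoc k A A A).toLinearMap
      ∘ₗ map (Coalgebra.comul : A →ₗ[k] A ⊗[k] A) LinearMap.id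


set_option maxHeartbeats 1000000 in
set_option synthInstance.maxHeartbeats 200000 in
/-- Proposition 2.7(iv): `(a⊗1)⊗(1⊗1) ∈ H1□H1` for all `a ∈ A`, `(1⊗1)⊗(a⊗1) ∈ H1□H1`
for all `a ∈ ᴴA = {a : d(a₁)⊗a₂ = 1⊗a}`, and `ᴴA ⊆ Aⁱⁿᵛ = {a : d(a) = ε(a)1}`. -/
theorem statement13 (act : H ⊗[k] A →ₗ[k] A) (d : A →ₗ[k] H)
    (hcm : HopfCrossedModule k A H act d) :
    (∀ a : A,
      ((a ⊗ₜ[k] (1 : H)) ⊗ₜ[k] ((1 : A) ⊗ₜ[k] (1 : H))) ∈ cot k A H d)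
    ∧ (∀ a : A, map d LinearMap.id (Coalgebra.comul a) = (1 : H) ⊗ₜ[k] a →
        (((1 : A) ⊗ₜ[k] (1 : H)) ⊗ₜ[k] (a ⊗ₜ[k] (1 : H))) ∈ cot k A H d
        ∧ d a = (Coalgebra.counit a : k) • (1 : H)) := by
  constructor
  · intro a
    obtain ⟨S, hS⟩ := TensorProduct.exists_finset (Coalgebra.comul (R := k) a)
    have ha : (∑ p ∈ S, (Coalgebra.counit (R := k) p.2 : k) • p.1) = a := by
      have h := Coalgebra.lTensor_counit_comul (R := k) a
      rw [hS, map_sum] at h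
      have h2 := congrArg (TensorProduct.rid k A) h
      simpa [map_sum, TensorProduct.smul_tmul'] using h2
    simp only [cot, Set.mem_setOf_eq, DRmap, DLmap, comul1, tmap, smap,
      LinearMap.coe_comp, Function.comp_apply, map_tmul, LinearMap.id_coe, id_eq,
      LinearEquiv.coe_coe]
    rw [hS]
    simp only [Bialgebra.comul_one, Algebra.TensorProduct.one_def, sum_tmul, tmul_sum,
      map_sum, map_smul, tensorTensorTensorComm_tmul, map_tmul,
      LinearMap.coe_comp, Function.comp_apply, LinearEquiv.coe_coe, lid_tmul,
      LinearMap.id_coe, id_eq, LinearMap.mul'_apply, hcm.d_one, one_mul, mul_one,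
      Bialgebra.counit_one, one_smul, tmul_smul, smul_tmul', assoc_tmul]
    rw [← ha]
    simp [sum_tmul, smul_tmul']
  · intro a h
    obtain ⟨S, hS⟩ := TensorProduct.exists_finset (Coalgebra.comul (R := k) a)
    have hd : (∑ p ∈ S, d p.1 ⊗ₜ[k] p.2) = (1 : H) ⊗ₜ[k] a := by
      rw [hS, map_sum] at h
      simpa using h
    constructor
    · simp only [cot, Set.mem_setOf_eq, DRmap, DLmap, comul1, tmap, smap,
        LinearMap.coe_comp, Function.comp_apply, map_tmul, LinearMap.id_coe, id_eq,
        LinearEquiv.coe_coe]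
      rw [hS]
      simp only [Bialgebra.comul_one, Algebra.TensorProduct.one_def, sum_tmul, tmul_sum,
        map_sum, map_smul, tensorTensorTensorComm_tmul, map_tmul,
        LinearMap.coe_comp, Function.comp_apply, LinearEquiv.coe_coe, lid_tmul,
        LinearMap.id_coe, id_eq, LinearMap.mul'_apply, Bialgebra.counit_one, one_smul,
        mul_one, one_mul, tmul_smul, smul_tmul', assoc_tmul]
      have h2 := congrArg (LinearMap.lTensor H ((TensorProduct.mk k A H).flip (1 : H))) hd
      simp only [map_sum, LinearMap.lTensor_tmul, TensorProduct.mk_apply,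
        LinearMap.flip_apply] at h2
      rw [← tmul_sum, h2]
    · have h2 := congrArg
        (fun z => (TensorProduct.rid k H) ((LinearMap.lTensor H (Coalgebra.counit (R := k) : A →ₗ[k] k)) z)) hd
      simp only [map_sum, LinearMap.lTensor_tmul, TensorProduct.rid_tmul] at h2
      have ha : (∑ p ∈ S, (Coalgebra.counit (R := k) p.2 : k) • p.1) = a := by
        have h3 := Coalgebra.lTensor_counit_comul (R := k) a
        rw [hS, map_sum] at h3
        have h4 := congrArg (TensorProduct.rid k A) h3
        simpa [map_sum, TensorProduct.smul_tmul'] using h4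
      rw [← h2, ← ha, map_sum]
      simp


end
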